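/- Let p be a prime and let L be a Moufang loop with a central subgroup Z of order p such that L/Z is an elementary abelian p-group. Then for all c, d ∈ L: (cd)² = c²d²[c,d] if p = 2, and (cd)^p = c^p d^p if p > 2. In particular, the map sending each coset cZ to c^p ∈ Z is well defined, and is a linear (group homomorphism) map L/Z → Z when p > 2. -/

import Mathlib

/-- An inverse property loop: a set with multiplication, identity, and two-sided
inverses satisfying `a⁻¹(ax) = x = (xa)a⁻¹`. -/
class IPLoop (L : Type*) extends Mul L, One L, Inv L where
  one_mul : ∀ a : L, 1 * a = a
  mul_one : ∀ a : L, a * 1 = a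
  inv_mul_cancel_left : ∀ a x : L, a⁻¹ * (a * x) = x
  mul_inv_cancel_right : ∀ a x : L, (x * a) * a⁻¹ = x

namespace IPLoop

variable {L : Type*} [IPLoop L]

/-- Powers with natural number exponent, `c^(n+1) = c * c^n`. -/
def npow (c : L) : ℕ → L
  | 0 => 1
  | n + 1 => c * npow c n

instance : Pow L ℕ := ⟨npow⟩

/-- Powers with integer exponent. -/
def zpow (c : L) : ℤ → L
  | Int.ofNat n => c ^ n
  | Int.negSucc n => (c ^ (n + 1))⁻¹

instance : Pow L ℤ := ⟨zpow⟩

/-- The commutator `[c,d] = (dc)⁻¹(cd)`. -/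
def comm (c d : L) : L := (d * c)⁻¹ * (c * d)

/-- The associator `[c,d,e] = (c(de))⁻¹((cd)e)`. -/
def assoc (c d e : L) : L := (c * (d * e))⁻¹ * ((c * d) * e)

/-- Membership in the center `Z(L)`. -/
def inCenter (z : L) : Prop :=
  (∀ x : L, comm z x = 1) ∧
  ∀ x y : L, assoc z x y = 1 ∧ assoc x z y = 1 ∧ assoc x y z = 1

/-- The Moufang identity `((dc)e)c = d(c(ec))`. -/
def IsMoufang (L : Type*) [IPLoop L] : Prop :=
  ∀ c d e : L, ((d * c) * e) * c = d * (c * (e * c))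

/-- A loop is of (central nilpotence) class at most 2 if every commutator and
every associator lies in the center. -/
def ClassTwo (L : Type*) [IPLoop L] : Prop :=
  (∀ c d : L, inCenter (comm c d)) ∧ ∀ c d e : L, inCenter (assoc c d e)

/-- The order of an element: least `n > 0` with `c^n = 1` (or `0` if none). -/
noncomputable def ordOf (c : L) : ℕ := sInf {n : ℕ | 0 < n ∧ c ^ n = 1}

/-- The subloop generated by a subset `S`. -/
def subloopClosure (S : Set L) : Set L :=
  ⋂₀ {T : Set L | (1 : L) ∈ T ∧ (∀ x ∈ T, x⁻¹ ∈ T) ∧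
      (∀ x ∈ T, ∀ y ∈ T, x * y ∈ T) ∧ S ⊆ T}

end IPLoop

/-!
If all commutators and associators of a Moufang loop are central, the associator is an
alternating, trilinear map into the abelian group of central elements: the Moufang identity and
centrality give six relations between associators, and additivity in each variable follows from
them by linear algebra. Consequently all associators among powers of two elements `c`, `d`
vanish, `[d, c ^ n] = [d, c] ^ n`, and induction on `n` gives
`(c * d) ^ n = c ^ n * d ^ n * [d, c] ^ (n.choose 2)`. Elements of `Z` satisfy `z ^ p = 1`
by Lagrange's theorem; for odd `p` the prime `p` divides `p.choose 2`, and for `p = 2` the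
commutator `[c, d]` is its own inverse.
-/

namespace IPLoop

variable {L : Type*} [IPLoop L]

theorem mul_left_cancel {a x y : L} (h : a * x = a * y) : x = y := by
  simpa only [inv_mul_cancel_left] using congrArg (a⁻¹ * ·) h

theorem mul_right_cancel {a x y : L} (h : x * a = y * a) : x = y := by
  simpa only [mul_inv_cancel_right] using congrArg (· * a⁻¹) h

theorem inv_mul_self (a : L) : a⁻¹ * a = 1 := by
  simpa only [mul_one] using inv_mul_cancel_left a 1

theorem mul_inv_self (a : L) : a * a⁻¹ = 1 := by
  simpa only [one_mul] using mul_inv_cancel_right a 1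

theorem inv_inv (a : L) : a⁻¹⁻¹ = a := by
  simpa only [inv_mul_self, mul_one] using inv_mul_cancel_left a⁻¹ a

theorem mul_inv_cancel_left (a x : L) : a * (a⁻¹ * x) = x := by
  simpa only [inv_inv] using inv_mul_cancel_left a⁻¹ x

theorem inv_mul_cancel_right (a x : L) : x * a⁻¹ * a = x := by
  simpa only [inv_inv] using mul_inv_cancel_right a⁻¹ x

theorem eq_inv_of_mul_eq_one_left {u v : L} (h : u * v = 1) : u = v⁻¹ := by
  simpa only [h, one_mul] using (mul_inv_cancel_right v u).symm

theorem eq_inv_of_mul_eq_one_right {u v : L} (h : u * v = 1) : v = u⁻¹ :=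
  mul_left_cancel (h.trans (mul_inv_self u).symm)

theorem mul_inv_rev (a b : L) : (a * b)⁻¹ = b⁻¹ * a⁻¹ := by
  have h : (b⁻¹ * a⁻¹)⁻¹ * b⁻¹ = a := by
    simpa only [inv_mul_cancel_right] using inv_mul_cancel_left (b⁻¹ * a⁻¹) a
  have hab : a * b = (b⁻¹ * a⁻¹)⁻¹ := by
    calc a * b = (b⁻¹ * a⁻¹)⁻¹ * b⁻¹ * b := by rw [h]
      _ = (b⁻¹ * a⁻¹)⁻¹ := inv_mul_cancel_right b _
  rw [hab, inv_inv]

theorem pow_succ (c : L) (n : ℕ) : c ^ (n + 1) = c * c ^ n := rfl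

theorem pow_one (c : L) : c ^ 1 = c := mul_one c

theorem one_pow (n : ℕ) : (1 : L) ^ n = 1 := by
  induction n with
  | zero => rfl
  | succ n ih => rw [pow_succ, ih, mul_one]

theorem assoc_spec (x y z : L) : x * y * z = x * (y * z) * assoc x y z :=
  (mul_inv_cancel_left _ _).symm

theorem comm_spec (x y : L) : x * y = y * x * comm x y :=
  (mul_inv_cancel_left _ _).symm

theorem assoc_eq_one_iff {x y z : L} : assoc x y z = 1 ↔ x * y * z = x * (y * z) := by
  refine ⟨fun h => ?_, fun h => ?_⟩
  · rw [assoc_spec, h, mul_one]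
  · rw [assoc, h, inv_mul_self]

theorem comm_eq_one_iff {x y : L} : comm x y = 1 ↔ x * y = y * x := by
  refine ⟨fun h => ?_, fun h => ?_⟩
  · rw [comm_spec, h, mul_one]
  · rw [comm, h, inv_mul_self]

theorem eq_assoc_of_mul_eq {x y z u : L} (h : x * y * z = x * (y * z) * u) : u = assoc x y z :=
  mul_left_cancel (h.symm.trans (assoc_spec x y z))

theorem eq_comm_of_mul_eq {x y u : L} (h : x * y = y * x * u) : u = comm x y :=
  mul_left_cancel (h.symm.trans (comm_spec x y))

theorem comm_one_right (x : L) : comm x 1 = 1 := by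
  rw [comm, one_mul, mul_one, inv_mul_self]

theorem inCenter_of_forall {z : L} (hc : ∀ x, z * x = x * z)
    (hl : ∀ x y, z * x * y = z * (x * y)) (hm : ∀ x y, x * z * y = x * (z * y))
    (hr : ∀ x y, x * y * z = x * (y * z)) : inCenter z :=
  ⟨fun x => comm_eq_one_iff.2 (hc x), fun x y =>
    ⟨assoc_eq_one_iff.2 (hl x y), assoc_eq_one_iff.2 (hm x y), assoc_eq_one_iff.2 (hr x y)⟩⟩

theorem inCenter_one : inCenter (1 : L) :=
  inCenter_of_forall (fun x => by rw [one_mul, mul_one]) (fun x y => by rw [one_mul, one_mul])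
    (fun x y => by rw [mul_one, one_mul]) (fun x y => by rw [mul_one, mul_one])

namespace inCenter

variable {z w : L} (hz : inCenter z)
include hz

theorem mul_comm (x : L) : z * x = x * z :=
  comm_eq_one_iff.1 (hz.1 x)

theorem mul_assoc_left (x y : L) : z * x * y = z * (x * y) :=
  assoc_eq_one_iff.1 (hz.2 x y).1

theorem mul_assoc_mid (x y : L) : x * z * y = x * (z * y) :=
  assoc_eq_one_iff.1 (hz.2 x y).2.1

theorem mul_assoc_right (x y : L) : x * y * z = x * (y * z) :=
  assoc_eq_one_iff.1 (hz.2 x y).2.2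

theorem mul_right_comm (x y : L) : x * z * y = x * y * z := by
  rw [hz.mul_assoc_mid, hz.mul_comm, hz.mul_assoc_right]

theorem mul (hw : inCenter w) : inCenter (z * w) := by
  refine inCenter_of_forall (fun x => ?_) (fun x y => ?_) (fun x y => ?_) (fun x y => ?_)
  · calc z * w * x = z * (x * w) := by rw [hz.mul_assoc_left, hw.mul_comm]
      _ = x * (z * w) := by rw [← hz.mul_assoc_left, hz.mul_comm, hz.mul_assoc_mid]
  · rw [hz.mul_assoc_left, hz.mul_assoc_left, hw.mul_assoc_left, hz.mul_assoc_left]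
  · rw [← hz.mul_assoc_mid, hw.mul_assoc_mid, hz.mul_assoc_mid, hz.mul_assoc_left]
  · rw [← hz.mul_assoc_mid, hz.mul_assoc_right, hw.mul_assoc_right, hz.mul_assoc_mid]

theorem inv : inCenter z⁻¹ := by
  refine inCenter_of_forall (fun x => mul_left_cancel (a := z) ?_)
    (fun x y => mul_left_cancel (a := z) ?_) (fun x y => mul_right_cancel (a := z) ?_)
    (fun x y => mul_right_cancel (a := z) ?_)
  · rw [mul_inv_cancel_left, ← hz.mul_assoc_left, hz.mul_comm, mul_inv_cancel_right]
  · rw [← hz.mul_assoc_left, mul_inv_cancel_left, mul_inv_cancel_left]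
  · calc x * z⁻¹ * y * z = x * z⁻¹ * z * y := by
          rw [hz.mul_assoc_right, ← hz.mul_comm, ← hz.mul_assoc_mid]
      _ = x * (z⁻¹ * y) * z := by
          rw [inv_mul_cancel_right, hz.mul_assoc_right, ← hz.mul_comm, mul_inv_cancel_left]
  · rw [inv_mul_cancel_right, hz.mul_assoc_right, inv_mul_cancel_right]

theorem pow (n : ℕ) : inCenter (z ^ n) := by
  induction n with
  | zero => exact inCenter_one
  | succ n ih => exact hz.mul ih

theorem mul_pow (c : L) (n : ℕ) : (c * z) ^ n = c ^ n * z ^ n := by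
  induction n with
  | zero => exact (mul_one 1).symm
  | succ n ih =>
    calc (c * z) ^ (n + 1) = c * (c ^ n * z ^ n) * z := by
          rw [pow_succ, ih, hz.mul_right_comm]
      _ = c ^ (n + 1) * z ^ (n + 1) := by
          rw [← (hz.pow n).mul_assoc_right, hz.mul_assoc_right, ← hz.mul_comm]; rfl

end inCenter

theorem comm_mul_comm {x y : L} (h : inCenter (comm x y)) : comm y x * comm x y = 1 := by
  calc comm y x * comm x y = (x * y)⁻¹ * (y * x * comm x y) := h.mul_assoc_right _ _
    _ = 1 := by rw [← comm_spec, inv_mul_self]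

abbrev Center (L : Type*) [IPLoop L] := {z : L // inCenter z}

instance : CommGroup (Center L) where
  mul a b := ⟨a * b, a.2.mul b.2⟩
  one := ⟨1, inCenter_one⟩
  inv a := ⟨a⁻¹, a.2.inv⟩
  mul_assoc a b c := Subtype.ext (a.2.mul_assoc_left b c)
  one_mul a := Subtype.ext (one_mul a.1)
  mul_one a := Subtype.ext (mul_one a.1)
  inv_mul_cancel a := Subtype.ext (inv_mul_self a.1)
  mul_comm a b := Subtype.ext (a.2.mul_comm b)

@[simp]
theorem Center.coe_one : ((1 : Center L) : L) = 1 := rfl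

@[simp]
theorem Center.coe_mul (a b : Center L) : ((a * b : Center L) : L) = a * b := rfl

theorem Center.coe_pow (a : Center L) (n : ℕ) : ((a ^ n : Center L) : L) = (a : L) ^ n := by
  induction n with
  | zero => rfl
  | succ n ih =>
    change ((a ^ n : Center L) : L) * a = a * (a : L) ^ n
    rw [ih, ← a.2.mul_comm]

theorem inCenter.pow_add {z : L} (hz : inCenter z) (m n : ℕ) : z ^ m * z ^ n = z ^ (m + n) := by
  simpa only [Center.coe_mul, Center.coe_pow] using
    congrArg Subtype.val (_root_.pow_add (⟨z, hz⟩ : Center L) m n).symm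

theorem inCenter.pow_mul {z : L} (hz : inCenter z) (m n : ℕ) : z ^ (m * n) = (z ^ m) ^ n := by
  simpa only [Center.coe_pow] using
    congrArg Subtype.val (_root_.pow_mul (⟨z, hz⟩ : Center L) m n)

theorem pow_natCard_eq_one {Z : Set L} (h1 : (1 : L) ∈ Z) (hinv : ∀ z ∈ Z, z⁻¹ ∈ Z)
    (hmul : ∀ z ∈ Z, ∀ w ∈ Z, z * w ∈ Z) (hcent : ∀ z ∈ Z, inCenter z) {z : L} (hz : z ∈ Z) :
    z ^ Nat.card Z = 1 := by
  let H : Subgroup (Center L) :=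
    { carrier := {w | (w : L) ∈ Z}
      one_mem' := h1
      mul_mem' := fun ha hb => hmul _ ha _ hb
      inv_mem' := fun ha => hinv _ ha }
  have hcard : Nat.card H = Nat.card Z :=
    Nat.card_congr (Equiv.subtypeSubtypeEquivSubtype (hcent _))
  have := congrArg (fun w : H => ((w : Center L) : L))
    (pow_card_eq_one' (x := (⟨⟨z, hcent z hz⟩, hz⟩ : H)))
  simpa only [hcard, Subgroup.coe_pow, Center.coe_pow, OneMemClass.coe_one, Center.coe_one]
    using this

namespace IsMoufang

variable (hM : IsMoufang L)
include hM

theorem flexible (x y : L) : x * y * x = x * (y * x) := by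
  simpa only [one_mul] using hM x 1 y

theorem right_alternative (x y : L) : x * y * y = x * (y * y) := by
  simpa only [one_mul, mul_one] using hM y x 1

theorem left_moufang (x y z : L) : x * (y * (x * z)) = x * y * x * z := by
  simpa only [mul_inv_rev, inv_inv] using congrArg (·⁻¹) (hM x⁻¹ z⁻¹ y⁻¹)

theorem left_alternative (x y : L) : x * (x * y) = x * x * y := by
  simpa only [one_mul, mul_one] using hM.left_moufang x 1 y

theorem assoc_left_alternative (x y : L) : assoc x x y = 1 :=
  assoc_eq_one_iff.2 (hM.left_alternative x y).symm

theorem assoc_flexible (x y : L) : assoc x y x = 1 :=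
  assoc_eq_one_iff.2 (hM.flexible x y)

theorem assoc_right_alternative (x y : L) : assoc x y y = 1 :=
  assoc_eq_one_iff.2 (hM.right_alternative x y)

end IsMoufang

namespace ClassTwo

variable (hL : ClassTwo L)
include hL

theorem assoc_mul_self (hM : IsMoufang L) (x y z : L) :
    assoc x (y * z) y = (assoc x y z)⁻¹ := by
  have ha := hL.2 x y z
  refine eq_inv_of_mul_eq_one_left (mul_left_cancel (a := x * (y * (z * y))) ?_)
  calc x * (y * (z * y)) * (assoc x (y * z) y * assoc x y z)
      = x * (y * z * y) * assoc x (y * z) y * assoc x y z := by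
        rw [← ha.mul_assoc_right, hM.flexible]
    _ = x * y * z * y := by rw [← assoc_spec, ← ha.mul_right_comm, ← assoc_spec]
    _ = x * (y * (z * y)) * 1 := by rw [hM y x z, mul_one]

theorem assoc_self_mul (hM : IsMoufang L) (x y z : L) :
    assoc y (z * y) x = (assoc z y x)⁻¹ := by
  have ha := hL.2 z y x
  refine eq_inv_of_mul_eq_one_right (mul_left_cancel (a := y * (z * (y * x))) ?_)
  calc y * (z * (y * x)) * (assoc z y x * assoc y (z * y) x)
      = y * (z * (y * x) * assoc z y x) * assoc y (z * y) x := by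
        rw [← (hL.2 y (z * y) x).mul_assoc_right, ha.mul_assoc_right]
    _ = y * z * y * x := by rw [← assoc_spec, ← assoc_spec, hM.flexible]
    _ = y * (z * (y * x)) * 1 := by rw [hM.left_moufang, mul_one]

theorem assoc_mul_inv (x y z : L) : assoc x (y * z) z⁻¹ = (assoc x y z)⁻¹ := by
  have ha := hL.2 x y z
  refine eq_inv_of_mul_eq_one_left (mul_left_cancel (a := x * y) ?_)
  calc x * y * (assoc x (y * z) z⁻¹ * assoc x y z)
      = x * (y * z * z⁻¹) * assoc x (y * z) z⁻¹ * assoc x y z := by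
        rw [← ha.mul_assoc_right, mul_inv_cancel_right]
    _ = x * y * z * z⁻¹ := by rw [← assoc_spec, ← ha.mul_right_comm, ← assoc_spec]
    _ = x * y * 1 := by rw [mul_inv_cancel_right, mul_one]

theorem assoc_inv_mul (x y z : L) : assoc x⁻¹ (x * y) z = (assoc x y z)⁻¹ := by
  have ha := hL.2 x y z
  refine eq_inv_of_mul_eq_one_right (mul_left_cancel (a := y * z) ?_)
  calc y * z * (assoc x y z * assoc x⁻¹ (x * y) z)
      = x⁻¹ * (x * (y * z) * assoc x y z) * assoc x⁻¹ (x * y) z := by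
        rw [← (hL.2 x⁻¹ (x * y) z).mul_assoc_right, ← ha.mul_assoc_right, inv_mul_cancel_left]
    _ = x⁻¹ * (x * y) * z := by rw [← assoc_spec, ← assoc_spec]
    _ = y * z * 1 := by rw [inv_mul_cancel_left, mul_one]

theorem assoc_cocycle (x y u v : L) :
    assoc x y (u * v) * assoc (x * y) u v
      = assoc y u v * assoc x (y * u) v * assoc x y u := by
  have h₁ := hL.2 x y u
  have h₂ := hL.2 x (y * u) v
  have h₃ := hL.2 y u v
  refine mul_left_cancel (a := x * (y * (u * v))) ?_
  calc x * (y * (u * v)) * (assoc x y (u * v) * assoc (x * y) u v)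
      = x * y * u * v := by
        rw [← (hL.2 (x * y) u v).mul_assoc_right, ← assoc_spec, ← assoc_spec]
    _ = x * (y * (u * v)) * assoc y u v * assoc x (y * u) v * assoc x y u := by
        rw [assoc_spec x y u, h₁.mul_right_comm, assoc_spec x (y * u) v, assoc_spec y u v,
          ← h₃.mul_assoc_right]
    _ = x * (y * (u * v)) * (assoc y u v * assoc x (y * u) v * assoc x y u) := by
        rw [← h₁.mul_assoc_right, ← h₂.mul_assoc_right]

theorem assoc_mul_center_right {z : L} (hz : inCenter z) (x y w : L) :
    assoc x y (w * z) = assoc x y w := by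
  refine (eq_assoc_of_mul_eq ?_).symm
  calc x * y * (w * z) = x * (y * w) * z * assoc x y w := by
        rw [← hz.mul_assoc_right, assoc_spec x y w, (hL.2 x y w).mul_right_comm]
    _ = x * (y * (w * z)) * assoc x y w := by rw [hz.mul_assoc_right, hz.mul_assoc_right]

theorem assoc_mul_comm_right (x y u v : L) : assoc x y (u * v) = assoc x y (v * u) := by
  rw [comm_spec u v, hL.assoc_mul_center_right (hL.1 u v)]

theorem comm_mul_right {x y z : L} (h₁ : assoc y z x = 1) (h₂ : assoc y x z = 1)
    (h₃ : assoc x y z = 1) : comm x (y * z) = comm x y * comm x z := by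
  have hy := hL.1 x y
  have hz := hL.1 x z
  refine (eq_comm_of_mul_eq ?_).symm
  calc x * (y * z) = y * x * z * comm x y := by
        rw [← assoc_eq_one_iff.1 h₃, comm_spec x y, hy.mul_right_comm]
    _ = y * (z * x) * comm x z * comm x y := by
        rw [assoc_eq_one_iff.1 h₂, comm_spec x z, ← hz.mul_assoc_right]
    _ = y * z * x * (comm x y * comm x z) := by
        rw [← assoc_eq_one_iff.1 h₁, hy.mul_assoc_right, hz.mul_comm]

end ClassTwo

variable {G : Type*} [AddCommGroup G]

/-- The relations satisfied by the associator of a Moufang loop of class two, written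
additively; on their own they already force `g` to be additive in each argument. -/
structure MoufangAssocLaws (g : L → L → L → G) : Prop where
  mul_self : ∀ x y z, g x (y * z) y = -g x y z
  self_mul : ∀ x y z, g y (z * y) x = -g z y x
  mul_inv : ∀ x y z, g x (y * z) z⁻¹ = -g x y z
  inv_mul : ∀ x y z, g x⁻¹ (x * y) z = -g x y z
  cocycle : ∀ x y u v, g x y (u * v) + g (x * y) u v = g y u v + g x (y * u) v + g x y u
  mul_comm_right : ∀ x y u v, g x y (u * v) = g x y (v * u)

namespace MoufangAssocLaws

def defect (g : L → L → L → G) (x y u v : L) : G := g x y (u * v) - g x y u - g x y v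

variable {g : L → L → L → G} (hg : MoufangAssocLaws g)
include hg

theorem swap_right (x y z : L) : g x y z = -g x z y := by
  have shift : ∀ b c, g x b c = g x b (b⁻¹ * c) := by
    intro b c
    have h₁ := hg.mul_self x c (c⁻¹ * b)
    have h₂ := hg.mul_inv x c (c⁻¹ * b)
    rw [mul_inv_cancel_left] at h₁ h₂
    rw [mul_inv_rev, inv_inv] at h₂
    rw [h₁, h₂]
  have h := hg.mul_self x z (z⁻¹ * y)
  rw [mul_inv_cancel_left] at h
  rw [h, ← shift]

theorem swap_left (x y z : L) : g x y z = -g y x z := by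
  have shift : ∀ a b, g (a * b) b z = g a b z := by
    intro a b
    have h₁ := hg.self_mul z (a * b) (b * (a * b)⁻¹)
    have h₂ := hg.inv_mul (b * (a * b)⁻¹) (a * b) z
    rw [inv_mul_cancel_right] at h₁
    rw [mul_inv_rev b, inv_inv, mul_inv_cancel_right, inv_mul_cancel_right] at h₂
    rw [h₁, h₂]
  have h := hg.self_mul z x (y * x⁻¹)
  rw [inv_mul_cancel_right] at h
  rw [h, ← shift (y * x⁻¹) x, inv_mul_cancel_right]

theorem swap_outer (x y z : L) : g x y z = -g z y x := by
  rw [hg.swap_left, hg.swap_right y, hg.swap_left y, neg_neg]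

theorem defect_comm (x y u v : L) : defect g x y u v = defect g x y v u := by
  rw [defect, defect, hg.mul_comm_right]
  abel

theorem defect_swap (x y u v : L) : defect g y x u v = -defect g x y u v := by
  rw [defect, defect, hg.swap_left y, hg.swap_left y, hg.swap_left y]
  abel

theorem defect_cocycle (x y u v : L) :
    defect g x y u v + defect g x v y u = defect g v u x y := by
  rw [defect, defect, defect, hg.swap_right x v, hg.swap_right x v, hg.swap_right x v,
    hg.swap_outer v u, hg.swap_outer v u, hg.swap_outer v u]
  linear_combination (norm := module) hg.cocycle x y u v

theorem defect_eq_zero (x y u v : L) : defect g x y u v = 0 := by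
  have h₁ := hg.defect_cocycle x u y v
  have h₂ := hg.defect_cocycle x v u y
  have h₃ := hg.defect_cocycle y v x u
  rw [hg.defect_swap y v] at h₁
  rw [hg.defect_comm x y v u] at h₂
  rw [hg.defect_comm y u v x, hg.defect_swap x u] at h₃
  linear_combination (norm := module) -h₁ + h₂ + h₃

theorem map_mul_right (x y u v : L) : g x y (u * v) = g x y u + g x y v := by
  have h := hg.defect_eq_zero x y u v
  rw [defect] at h
  linear_combination (norm := module) h

theorem map_mul_mid (x u v y : L) : g x (u * v) y = g x u y + g x v y := by
  rw [hg.swap_right x (u * v), hg.map_mul_right, hg.swap_right x u, hg.swap_right x v]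
  abel

theorem map_mul_left (u v x y : L) : g (u * v) x y = g u x y + g v x y := by
  rw [hg.swap_outer (u * v), hg.map_mul_right, hg.swap_outer u, hg.swap_outer v]
  abel

end MoufangAssocLaws

namespace ClassTwo

variable (hL : ClassTwo L) (hM : IsMoufang L)
include hL hM

theorem moufangAssocLaws :
    MoufangAssocLaws fun x y z => Additive.ofMul (⟨assoc x y z, hL.2 x y z⟩ : Center L) := by
  have inv_eq {a b : Center L} (h : (a : L) = (b : L)⁻¹) :
      Additive.ofMul a = -Additive.ofMul b :=
    congrArg Additive.ofMul (Subtype.ext h)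
  exact
    { mul_self := fun x y z => inv_eq (hL.assoc_mul_self hM x y z)
      self_mul := fun x y z => inv_eq (hL.assoc_self_mul hM x y z)
      mul_inv := fun x y z => inv_eq (hL.assoc_mul_inv x y z)
      inv_mul := fun x y z => inv_eq (hL.assoc_inv_mul x y z)
      cocycle := fun x y u v =>
        congrArg Additive.ofMul (Subtype.ext (hL.assoc_cocycle x y u v))
      mul_comm_right := fun x y u v =>
        congrArg Additive.ofMul (Subtype.ext (hL.assoc_mul_comm_right x y u v)) }

theorem assoc_mul_left (u v x y : L) : assoc (u * v) x y = assoc u x y * assoc v x y :=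
  congrArg (fun a : Additive (Center L) => (a.toMul : L))
    ((hL.moufangAssocLaws hM).map_mul_left u v x y)

theorem assoc_mul_mid (x u v y : L) : assoc x (u * v) y = assoc x u y * assoc x v y :=
  congrArg (fun a : Additive (Center L) => (a.toMul : L))
    ((hL.moufangAssocLaws hM).map_mul_mid x u v y)

theorem assoc_mul_right (x y u v : L) : assoc x y (u * v) = assoc x y u * assoc x y v :=
  congrArg (fun a : Additive (Center L) => (a.toMul : L))
    ((hL.moufangAssocLaws hM).map_mul_right x y u v)

theorem assoc_pow_mid_eq_one {x w y : L} (h : assoc x w y = 1) (n : ℕ) :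
    assoc x (w ^ n) y = 1 := by
  induction n with
  | zero => exact (inCenter_one.2 x y).2.1
  | succ n ih => rw [pow_succ, hL.assoc_mul_mid hM, h, ih, mul_one]

theorem assoc_pow_right_eq_one {x y w : L} (h : assoc x y w = 1) (n : ℕ) :
    assoc x y (w ^ n) = 1 := by
  induction n with
  | zero => exact (inCenter_one.2 x y).2.2
  | succ n ih => rw [pow_succ, hL.assoc_mul_right hM, h, ih, mul_one]

theorem comm_pow_right (x y : L) (n : ℕ) : comm x (y ^ n) = comm x y ^ n := by
  induction n with
  | zero => exact comm_one_right x
  | succ n ih =>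
    rw [pow_succ, hL.comm_mul_right (hL.assoc_pow_mid_eq_one hM (hM.assoc_left_alternative y x) n)
      (hL.assoc_pow_right_eq_one hM (hM.assoc_flexible y x) n)
      (hL.assoc_pow_right_eq_one hM (hM.assoc_right_alternative x y) n), ih]
    rfl

theorem mul_mul_pow_mul_pow (c d : L) (n : ℕ) :
    c * d * (c ^ n * d ^ n) = c ^ (n + 1) * d ^ (n + 1) * comm d c ^ n := by
  have hq := (hL.1 d c).pow n
  have hcd : assoc (c * d) c d = 1 := by
    rw [hL.assoc_mul_left hM, hM.assoc_left_alternative, hM.assoc_flexible, mul_one]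
  have h₁ := hL.assoc_pow_right_eq_one hM (hL.assoc_pow_mid_eq_one hM hcd n) n
  have h₂ := hL.assoc_pow_right_eq_one hM (hM.assoc_flexible c d) n
  have h₃ := hL.assoc_pow_mid_eq_one hM (hM.assoc_left_alternative c d) n
  have h₄ := hL.assoc_pow_right_eq_one hM (hM.assoc_right_alternative (c ^ (n + 1)) d) n
  calc c * d * (c ^ n * d ^ n) = c * (c ^ n * d * comm d c ^ n) * d ^ n := by
        rw [← assoc_eq_one_iff.1 h₁, assoc_eq_one_iff.1 h₂, comm_spec d, hL.comm_pow_right hM]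
    _ = c ^ (n + 1) * d * d ^ n * comm d c ^ n := by
        rw [← hq.mul_assoc_right, ← assoc_eq_one_iff.1 h₃, hq.mul_right_comm]; rfl
    _ = c ^ (n + 1) * d ^ (n + 1) * comm d c ^ n := by rw [assoc_eq_one_iff.1 h₄]; rfl

theorem mul_pow (c d : L) (n : ℕ) :
    (c * d) ^ n = c ^ n * d ^ n * comm d c ^ n.choose 2 := by
  have hq := hL.1 d c
  induction n with
  | zero => exact (mul_one _).symm.trans (mul_one _).symm
  | succ n ih =>
    calc (c * d) ^ (n + 1) = c * d * (c ^ n * d ^ n) * comm d c ^ n.choose 2 := by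
          rw [pow_succ, ih, (hq.pow _).mul_assoc_right (c * d)]
      _ = c ^ (n + 1) * d ^ (n + 1) * comm d c ^ (n + n.choose 2) := by
          rw [hL.mul_mul_pow_mul_pow hM, (hq.pow _).mul_assoc_right, hq.pow_add]
      _ = c ^ (n + 1) * d ^ (n + 1) * comm d c ^ (n + 1).choose 2 := by
          rw [Nat.choose_succ_succ', Nat.choose_one_right]

theorem mul_sq {c d : L} (h : comm c d ^ 2 = 1) : (c * d) ^ 2 = c ^ 2 * d ^ 2 * comm c d := by
  have hsq : comm c d * comm c d = 1 := by rwa [pow_succ, pow_one] at h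
  have hdc : comm d c = comm c d :=
    (eq_inv_of_mul_eq_one_left (comm_mul_comm (hL.1 c d))).trans
      (eq_inv_of_mul_eq_one_left hsq).symm
  rw [hL.mul_pow hM, hdc, Nat.choose_self, pow_one]

end ClassTwo

end IPLoop

open IPLoop in
theorem stmt11_general {L : Type*} [IPLoop L] (hM : IsMoufang L)
    (p : ℕ) (hp : p.Prime) (Z : Set L)
    (h1 : (1 : L) ∈ Z) (hinv : ∀ z ∈ Z, z⁻¹ ∈ Z)
    (hmulZ : ∀ z ∈ Z, ∀ w ∈ Z, z * w ∈ Z)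
    (hcent : ∀ z ∈ Z, inCenter z) (hcard : Nat.card Z = p)
    (hcomm : ∀ c d : L, comm c d ∈ Z)
    (hassoc : ∀ c d e : L, assoc c d e ∈ Z) :
    (p = 2 → ∀ c d : L,
      (c * d) ^ (2 : ℕ) = (c ^ (2 : ℕ) * d ^ (2 : ℕ)) * comm c d) ∧
    (2 < p → ∀ c d : L, (c * d) ^ p = c ^ p * d ^ p) ∧
    (∀ c d : L, (∃ z ∈ Z, d = c * z) → d ^ p = c ^ p) := by
  have hL : ClassTwo L := ⟨fun c d => hcent _ (hcomm c d), fun c d e => hcent _ (hassoc c d e)⟩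
  have pow_p : ∀ z ∈ Z, z ^ p = 1 := fun z hz =>
    hcard ▸ pow_natCard_eq_one h1 hinv hmulZ hcent hz
  refine ⟨?_, fun hp2 c d => ?_, ?_⟩
  · rintro rfl c d
    exact hL.mul_sq hM (pow_p _ (hcomm c d))
  · obtain ⟨t, ht⟩ := hp.dvd_choose_self two_ne_zero hp2
    rw [hL.mul_pow hM, ht, (hL.1 d c).pow_mul, pow_p _ (hcomm d c), IPLoop.one_pow,
      IPLoop.mul_one]
  · rintro c _ ⟨z, hz, rfl⟩
    rw [(hcent z hz).mul_pow, pow_p z hz, IPLoop.mul_one]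

open IPLoop in
/-- If `L` is a Moufang loop with a central subgroup `Z` of order `p` such that
`L/Z` is an elementary abelian `p`-group, then `(cd)² = c²d²[c,d]` when `p = 2`
and `(cd)^p = c^p d^p` when `p > 2`; in particular `cZ ↦ c^p` is well defined. -/
theorem stmt11 {L : Type*} [IPLoop L] (hM : IsMoufang L)
    (p : ℕ) (hp : p.Prime) (Z : Set L)
    (h1 : (1 : L) ∈ Z) (hinv : ∀ z ∈ Z, z⁻¹ ∈ Z)
    (hmulZ : ∀ z ∈ Z, ∀ w ∈ Z, z * w ∈ Z)
    (hcent : ∀ z ∈ Z, inCenter z) (hcard : Nat.card Z = p)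
    (hpow : ∀ c : L, c ^ p ∈ Z) (hcomm : ∀ c d : L, comm c d ∈ Z)
    (hassoc : ∀ c d e : L, assoc c d e ∈ Z) :
    (p = 2 → ∀ c d : L,
      (c * d) ^ (2 : ℕ) = (c ^ (2 : ℕ) * d ^ (2 : ℕ)) * comm c d) ∧
    (2 < p → ∀ c d : L, (c * d) ^ p = c ^ p * d ^ p) ∧
    (∀ c d : L, (∃ z ∈ Z, d = c * z) → d ^ p = c ^ p) :=
  stmt11_general hM p hp Z h1 hinv hmulZ hcent hcard hcomm hassoc
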